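/- arXiv:1610.03734 — 2 statements merged into one kernel-verified Lean document; each statement's English description precedes it below -/
import Mathlib

section
/- Let G : ℝ → ℝ be differentiable with derivative g, G(0) = 0, and suppose there exist R ≥ 0 and μ > 2 such that 0 < μ·G(t) ≤ g(t)·t for all |t| > R. Then there exist constants c₁ > 0 and c₂ ≥ 0 such that G(t) ≥ c₁·|t|^μ − c₂ for all t ∈ ℝ. -/
/-!
For `t ≥ T > 0` the Ambrosetti–Rabinowitz inequality `μ G(t) ≤ g(t) t` says exactly that
`t ↦ G(t) t^{-μ}` has nonnegative derivative, so `G(t) ≥ G(T) T^{-μ} t^μ`; applying this to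
`t ↦ G(-t)` handles `t ≤ -T`, and on the compact interval `[-T, T]` the continuous function `G`
is bounded below.
-/

open Set

section AmbrosettiRabinowitz

variable {G g : ℝ → ℝ} {μ T : ℝ}

theorem monotoneOn_mul_rpow_neg (hderiv : ∀ t, HasDerivAt G (g t) t) (hT : 0 < T)
    (hAR : ∀ s, T ≤ s → μ * G s ≤ g s * s) :
    MonotoneOn (fun s => G s * s ^ (-μ)) (Ici T) := by
  have hF : ∀ s, 0 < s → HasDerivAt (fun s => G s * s ^ (-μ))
      (g s * s ^ (-μ) + G s * (-μ * s ^ (-μ - 1))) s := fun s hs =>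
    (hderiv s).mul (Real.hasDerivAt_rpow_const (Or.inl hs.ne'))
  apply monotoneOn_of_deriv_nonneg (convex_Ici T)
  · exact fun s hs => (hF s (hT.trans_le hs)).continuousAt.continuousWithinAt
  · intro s hs
    rw [interior_Ici] at hs
    exact (hF s (hT.trans hs)).differentiableAt.differentiableWithinAt
  · intro s hs
    rw [interior_Ici] at hs
    have hs0 : 0 < s := hT.trans hs
    have hsplit : s ^ (-μ) = s ^ (-μ - 1) * s := by
      rw [← Real.rpow_add_one hs0.ne']; ring_nf
    rw [(hF s hs0).deriv, hsplit]
    have hfactor : g s * (s ^ (-μ - 1) * s) + G s * (-μ * s ^ (-μ - 1))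
        = (g s * s - μ * G s) * s ^ (-μ - 1) := by ring
    rw [hfactor]
    exact mul_nonneg (by linarith [hAR s hs.le]) (Real.rpow_pos_of_pos hs0 _).le

theorem mul_rpow_le_of_mul_le_deriv_mul (hderiv : ∀ t, HasDerivAt G (g t) t) (hT : 0 < T)
    (hAR : ∀ s, T ≤ s → μ * G s ≤ g s * s) {t : ℝ} (ht : T ≤ t) :
    G T * T ^ (-μ) * t ^ μ ≤ G t := by
  have ht0 : 0 < t := hT.trans_le ht
  calc G T * T ^ (-μ) * t ^ μ ≤ G t * t ^ (-μ) * t ^ μ :=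
        mul_le_mul_of_nonneg_right
          (monotoneOn_mul_rpow_neg hderiv hT hAR self_mem_Ici ht ht)
          (Real.rpow_nonneg ht0.le _)
    _ = G t := by
        rw [mul_assoc, ← Real.rpow_add ht0, neg_add_cancel, Real.rpow_zero, mul_one]

theorem exists_mul_abs_rpow_le_of_ambrosettiRabinowitz (hderiv : ∀ t, HasDerivAt G (g t) t)
    {R : ℝ} (hμ : 0 < μ) (hAR : ∀ t, R < |t| → 0 < μ * G t ∧ μ * G t ≤ g t * t) :
    ∃ c > 0, ∃ T, ∀ t, T ≤ |t| → c * |t| ^ μ ≤ G t := by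
  set T := |R| + 1
  have hT : 0 < T := by positivity
  have hRT : ∀ s, T ≤ s → R < |s| := fun s hs => by
    rw [abs_of_pos (hT.trans_le hs)]; linarith [le_abs_self R]
  have hpos : ∀ s, T ≤ s → μ * G s ≤ g s * s := fun s hs => (hAR s (hRT s hs)).2
  have hneg : ∀ s, T ≤ s → μ * G (-s) ≤ -g (-s) * s := fun s hs => by
    have := (hAR (-s) (by rw [abs_neg]; exact hRT s hs)).2
    linarith
  have hderivNeg : ∀ s, HasDerivAt (fun x => G (-x)) (-g (-s)) s := fun s => by
    have h := (hderiv (-s)).comp s (hasDerivAt_neg s)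
    rwa [mul_neg, mul_one] at h
  have hGT : 0 < G T := pos_of_mul_pos_right (hAR T (hRT T le_rfl)).1 hμ.le
  have hGnegT : 0 < G (-T) :=
    pos_of_mul_pos_right (hAR (-T) (by rw [abs_neg]; exact hRT T le_rfl)).1 hμ.le
  have hTpow : 0 < T ^ (-μ) := Real.rpow_pos_of_pos hT _
  refine ⟨min (G T) (G (-T)) * T ^ (-μ), mul_pos (lt_min hGT hGnegT) hTpow, T, fun t ht => ?_⟩
  rcases le_or_gt 0 t with ht0 | ht0
  · rw [abs_of_nonneg ht0] at ht ⊢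
    calc min (G T) (G (-T)) * T ^ (-μ) * t ^ μ ≤ G T * T ^ (-μ) * t ^ μ :=
          mul_le_mul_of_nonneg_right (mul_le_mul_of_nonneg_right (min_le_left _ _) hTpow.le)
            (Real.rpow_nonneg ht0 _)
      _ ≤ G t := mul_rpow_le_of_mul_le_deriv_mul hderiv hT hpos ht
  · rw [abs_of_neg ht0] at ht ⊢
    calc min (G T) (G (-T)) * T ^ (-μ) * (-t) ^ μ ≤ G (-T) * T ^ (-μ) * (-t) ^ μ :=
          mul_le_mul_of_nonneg_right (mul_le_mul_of_nonneg_right (min_le_right _ _) hTpow.le)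
            (Real.rpow_nonneg (neg_nonneg.2 ht0.le) _)
      _ ≤ G (-(-t)) := mul_rpow_le_of_mul_le_deriv_mul hderivNeg hT hneg ht
      _ = G t := by rw [neg_neg]

end AmbrosettiRabinowitz

theorem exists_mul_abs_rpow_sub_le_of_continuous {G : ℝ → ℝ} (hG : Continuous G) {c μ T : ℝ}
    (hc : 0 ≤ c) (hμ : 0 ≤ μ) (h : ∀ t, T ≤ |t| → c * |t| ^ μ ≤ G t) :
    ∃ c₂ ≥ (0 : ℝ), ∀ t, c * |t| ^ μ - c₂ ≤ G t := by
  obtain ⟨m, hm⟩ := (isCompact_Icc (a := -T) (b := T)).bddBelow_image hG.continuousOn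
  refine ⟨max 0 (c * |T| ^ μ - m), le_max_left _ _, fun t => ?_⟩
  rcases le_or_gt T |t| with ht | ht
  · linarith [h t ht, le_max_left 0 (c * |T| ^ μ - m)]
  · have hGt : m ≤ G t := hm ⟨t, ⟨by linarith [neg_abs_le t], by linarith [le_abs_self t]⟩, rfl⟩
    have hpow : c * |t| ^ μ ≤ c * |T| ^ μ :=
      mul_le_mul_of_nonneg_left
        (Real.rpow_le_rpow (abs_nonneg t) (ht.le.trans (le_abs_self T)) hμ) hc
    linarith [le_max_right 0 (c * |T| ^ μ - m)]

theorem stmt_0_general (G g : ℝ → ℝ) (hderiv : ∀ t, HasDerivAt G (g t) t)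
    (R μ : ℝ) (hμ : 2 < μ)
    (hAR : ∀ t : ℝ, R < |t| → 0 < μ * G t ∧ μ * G t ≤ g t * t) :
    ∃ c₁ > (0:ℝ), ∃ c₂ ≥ (0:ℝ), ∀ t : ℝ, G t ≥ c₁ * |t| ^ μ - c₂ := by
  have hμ0 : 0 < μ := by linarith
  obtain ⟨c₁, hc₁, T, hgrowth⟩ := exists_mul_abs_rpow_le_of_ambrosettiRabinowitz hderiv hμ0 hAR
  have hG : Continuous G := continuous_iff_continuousAt.2 fun t => (hderiv t).continuousAt
  obtain ⟨c₂, hc₂, hbound⟩ :=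
    exists_mul_abs_rpow_sub_le_of_continuous hG hc₁.le hμ0.le hgrowth
  exact ⟨c₁, hc₁, c₂, hc₂, hbound⟩

theorem stmt_0 (G g : ℝ → ℝ) (hderiv : ∀ t, HasDerivAt G (g t) t) (hG0 : G 0 = 0)
    (R μ : ℝ) (hR : 0 ≤ R) (hμ : 2 < μ)
    (hAR : ∀ t : ℝ, R < |t| → 0 < μ * G t ∧ μ * G t ≤ g t * t) :
    ∃ c₁ > (0:ℝ), ∃ c₂ ≥ (0:ℝ), ∀ t : ℝ, G t ≥ c₁ * |t| ^ μ - c₂ :=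
  stmt_0_general G g hderiv R μ hμ hAR
end

section
/- Let H₁, H₂ be real Hilbert spaces and K : H₁ → H₂ a bounded linear operator. Suppose there is a compact linear operator T : H₂ → H₁ (the trace/embedding) such that ⟨K u, v⟩_{H₂} = ⟨u, T v⟩_{H₁} for all u ∈ H₁, v ∈ H₂, and ‖K u‖²_{H₂} ≤ ‖u‖_{H₁}·‖T(Ku)‖_{H₁}. Then K is a compact operator. -/
/-!
Applied to `u - u'` with `u, u'` in the closed unit ball, the hypothesis gives
`‖K u - K u'‖ ^ 2 ≤ 2 ‖T (K u) - T (K u')‖`: on `K '' closedBall 0 1` the map `T` has a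
(Hölder-`1/2`) uniformly continuous inverse. Hence total boundedness of the relatively
compact set `T '' (K '' closedBall 0 1)` pulls back to `K '' closedBall 0 1`, whose closure
is then compact because the target is complete.
-/

open Metric Set Uniformity

theorem TotallyBounded.of_image {α β : Type*} [UniformSpace α] [UniformSpace β]
    {f : α → β} {s : Set α}
    (hf : ∀ V ∈ 𝓤 α, ∃ U ∈ 𝓤 β, ∀ x ∈ s, ∀ y ∈ s, (f x, f y) ∈ U → (x, y) ∈ V)
    (hs : TotallyBounded (f '' s)) : TotallyBounded s := by
  rw [totallyBounded_iff_subset]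
  intro V hV
  obtain ⟨U, hU, hUV⟩ := hf V hV
  obtain ⟨t, hts, htf, hcov⟩ := exists_subset_image_finite_and.1 (hs.exists_subset hU)
  refine ⟨t, hts, htf, fun x hx => ?_⟩
  obtain ⟨_, ⟨y, hyt, rfl⟩, hxy⟩ := mem_iUnion₂.1 (hcov (mem_image_of_mem f hx))
  exact mem_iUnion₂.2 ⟨y, hyt, hUV x hx y (hts hyt) hxy⟩

section

variable {𝕜 E F G : Type*} [NontriviallyNormedField 𝕜]
  [NormedAddCommGroup E] [NormedSpace 𝕜 E] [NormedAddCommGroup F] [NormedSpace 𝕜 F]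
  [NormedAddCommGroup G] [NormedSpace 𝕜 G]
  {K : E →L[𝕜] F} {T : F →L[𝕜] G}

theorem sq_dist_le_two_mul_dist_of_sq_norm_le (hKT : ∀ u, ‖K u‖ ^ 2 ≤ ‖u‖ * ‖T (K u)‖)
    {u u' : E} (hu : u ∈ closedBall 0 1) (hu' : u' ∈ closedBall 0 1) :
    dist (K u) (K u') ^ 2 ≤ 2 * dist (T (K u)) (T (K u')) := by
  have hdiam : ‖u - u'‖ ≤ 2 := by
    rw [← dist_eq_norm]
    linarith [dist_triangle u 0 u', mem_closedBall.1 hu, mem_closedBall'.1 hu']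
  simp only [dist_eq_norm, ← map_sub]
  exact (hKT (u - u')).trans (by gcongr)

theorem uniformContinuous_inverse_on_image_closedBall_of_sq_norm_le
    (hKT : ∀ u, ‖K u‖ ^ 2 ≤ ‖u‖ * ‖T (K u)‖) :
    ∀ V ∈ 𝓤 F, ∃ U ∈ 𝓤 G, ∀ x ∈ K '' closedBall 0 1, ∀ y ∈ K '' closedBall 0 1,
      (T x, T y) ∈ U → (x, y) ∈ V := by
  intro V hV
  obtain ⟨ε, hε, hεV⟩ := mem_uniformity_dist.1 hV
  refine ⟨{p | dist p.1 p.2 < ε ^ 2 / 2}, dist_mem_uniformity (by positivity), ?_⟩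
  rintro _ ⟨u, hu, rfl⟩ _ ⟨u', hu', rfl⟩ (hclose : dist (T (K u)) (T (K u')) < ε ^ 2 / 2)
  refine hεV (lt_of_pow_lt_pow_left₀ 2 hε.le ?_)
  linarith [sq_dist_le_two_mul_dist_of_sq_norm_le hKT hu hu']

theorem isCompactOperator_of_sq_norm_le [CompleteSpace F] (hT : IsCompactOperator T)
    (hKT : ∀ u, ‖K u‖ ^ 2 ≤ ‖u‖ * ‖T (K u)‖) : IsCompactOperator K := by
  have hTK : TotallyBounded (T '' (K '' closedBall 0 1)) := by
    rw [image_image]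
    have : IsCompactOperator (T.comp K : E →ₗ[𝕜] G) := hT.comp_clm K
    exact (this.isCompact_closure_image_closedBall 1).totallyBounded.subset subset_closure
  have hK : TotallyBounded (K '' closedBall 0 1) :=
    hTK.of_image (uniformContinuous_inverse_on_image_closedBall_of_sq_norm_le hKT)
  exact (isCompactOperator_iff_isCompact_closure_image_closedBall (K : E →ₗ[𝕜] F) one_pos).2
    (hK.closure.isCompact_of_isClosed isClosed_closure)

end

theorem stmt_8_general {H₁ H₂ : Type*}
    [NormedAddCommGroup H₁] [InnerProductSpace ℝ H₁]
    [NormedAddCommGroup H₂] [InnerProductSpace ℝ H₂] [CompleteSpace H₂]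
    (K : H₁ →L[ℝ] H₂) (T : H₂ →L[ℝ] H₁) (hT : IsCompactOperator T)
    (hid : ∀ u : H₁, ‖K u‖ ^ 2 ≤ ‖u‖ * ‖T (K u)‖) :
    IsCompactOperator K :=
  isCompactOperator_of_sq_norm_le hT hid

theorem stmt_8 {H₁ H₂ : Type*}
    [NormedAddCommGroup H₁] [InnerProductSpace ℝ H₁] [CompleteSpace H₁]
    [NormedAddCommGroup H₂] [InnerProductSpace ℝ H₂] [CompleteSpace H₂]
    (K : H₁ →L[ℝ] H₂) (T : H₂ →L[ℝ] H₁) (hT : IsCompactOperator T)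
    (hadj : ∀ (u : H₁) (v : H₂), (inner ℝ (K u) v : ℝ) = inner ℝ u (T v))
    (hid : ∀ u : H₁, ‖K u‖ ^ 2 ≤ ‖u‖ * ‖T (K u)‖) :
    IsCompactOperator K :=
  stmt_8_general K T hT hid
end
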